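/- (Lower bound on the Ornstein–Uhlenbeck mean first passage time.) For every μ > 0 and every threshold η > 0, the quantity T̄(η) = (2/μ)·(√π·φ(η√(μ/2)) + ψ(η√(μ/2))) satisfies T̄(η) ≥ (2/μ)·( √π·(e^{η²μ/2} − 1)/(√2·η·√μ) + (e^{η²μ/2} − 1)/(2η²μ) − 1/2 ). -/

import Mathlib

/-!
Put `z = η √(μ/2)`, so that `η²μ/2 = z²` and `√2 η √μ = 2z`. Inserting a factor `s / t ≤ 1` under
an integral over `[0, t]` makes the integrands `s e^{±s²}` elementary, which gives
`φ(z) ≥ (e^{z²} - 1) / (2z)` and `∫₀^τ e^{-s²} ds ≥ (1 - e^{-τ²}) / (2τ)`. The latter yields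
`e^{τ²} ∫₀^τ e^{-s²} ds ≥ (e^{τ²} - 1) / (2τ) ≥ τ (e^{τ²} - 1) / (2z²)` for `0 < τ ≤ z`, and
integrating, `ψ(z) ≥ (e^{z²} - 1) / (4z²) - 1/4`, which is even better than needed by `1/4`.
-/

open Real intervalIntegral

theorem integral_id_mul_le_mul_integral {f : ℝ → ℝ} {a b : ℝ} (hab : a ≤ b)
    (hf : IntervalIntegrable f MeasureTheory.volume a b) (hf0 : ∀ x ∈ Set.Icc a b, 0 ≤ f x) :
    ∫ x in a..b, x * f x ≤ b * ∫ x in a..b, f x := by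
  rw [← integral_const_mul]
  refine integral_mono_on hab (hf.continuousOn_mul continuousOn_id) (hf.const_mul b) ?_
  intro x hx
  exact mul_le_mul_of_nonneg_right hx.2 (hf0 x hx)

theorem integral_mul_exp_mul_sq {c : ℝ} (hc : c ≠ 0) (a b : ℝ) :
    ∫ x in a..b, x * exp (c * x ^ 2) = (exp (c * b ^ 2) - exp (c * a ^ 2)) / (2 * c) := by
  have hderiv (x : ℝ) : HasDerivAt (fun x => exp (c * x ^ 2) / (2 * c)) (x * exp (c * x ^ 2)) x := by
    refine ((((hasDerivAt_pow 2 x).const_mul c).exp).div_const (2 * c)).congr_deriv ?_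
    field_simp
    ring
  rw [integral_eq_sub_of_hasDerivAt (fun x _ => hderiv x)
    ((by fun_prop : Continuous _).intervalIntegrable _ _)]
  ring

theorem integral_mul_exp_sq (z : ℝ) :
    ∫ τ in (0:ℝ)..z, τ * exp (τ ^ 2) = (exp (z ^ 2) - 1) / 2 := by
  simpa using integral_mul_exp_mul_sq one_ne_zero 0 z

theorem exp_sq_sub_one_div_le_integral_exp_sq {z : ℝ} (hz : 0 < z) :
    (exp (z ^ 2) - 1) / (2 * z) ≤ ∫ τ in (0:ℝ)..z, exp (τ ^ 2) := by
  have h := integral_id_mul_le_mul_integral hz.le (f := fun τ => exp (τ ^ 2))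
    ((by fun_prop : Continuous _).intervalIntegrable _ _) (fun _ _ => (exp_pos _).le)
  rw [integral_mul_exp_sq] at h
  rw [div_le_iff₀ (by positivity)]
  linarith

theorem exp_sq_sub_one_le_mul_integral_exp_neg_sq {τ : ℝ} (hτ : 0 ≤ τ) :
    exp (τ ^ 2) - 1 ≤ 2 * τ * exp (τ ^ 2) * ∫ s in (0:ℝ)..τ, exp (-s ^ 2) := by
  have h := integral_id_mul_le_mul_integral hτ (f := fun s => exp (-s ^ 2))
    ((by fun_prop : Continuous _).intervalIntegrable _ _) (fun _ _ => (exp_pos _).le)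
  have h1 : ∫ s in (0:ℝ)..τ, s * exp (-s ^ 2) = (1 - exp (-τ ^ 2)) / 2 := by
    have := integral_mul_exp_mul_sq (c := -1) (by norm_num) 0 τ
    simp only [neg_one_mul] at this
    rw [this]
    norm_num
    ring
  calc exp (τ ^ 2) - 1 = 2 * exp (τ ^ 2) * ((1 - exp (-τ ^ 2)) / 2) := by
        rw [exp_neg]; field_simp
    _ ≤ 2 * exp (τ ^ 2) * (τ * ∫ s in (0:ℝ)..τ, exp (-s ^ 2)) := by
        gcongr; rwa [h1] at h
    _ = _ := by ring

theorem le_integral_exp_sq_mul_integral_exp_neg_sq {z : ℝ} (hz : 0 < z) :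
    (exp (z ^ 2) - 1) / (4 * z ^ 2) - 1 / 4
      ≤ ∫ τ in (0:ℝ)..z, exp (τ ^ 2) * ∫ s in (0:ℝ)..τ, exp (-s ^ 2) := by
  have hpointwise : ∀ τ ∈ Set.Icc 0 z,
      (τ * exp (τ ^ 2) - τ) / (2 * z ^ 2) ≤ exp (τ ^ 2) * ∫ s in (0:ℝ)..τ, exp (-s ^ 2) := by
    rintro τ ⟨hτ0, hτz⟩
    set I := ∫ s in (0:ℝ)..τ, exp (-s ^ 2)
    have hI : 0 ≤ I := integral_nonneg hτ0 fun _ _ => (exp_pos _).le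
    rw [div_le_iff₀ (by positivity)]
    calc τ * exp (τ ^ 2) - τ = τ * (exp (τ ^ 2) - 1) := by ring
      _ ≤ τ * (2 * τ * exp (τ ^ 2) * I) := by
        gcongr; exact exp_sq_sub_one_le_mul_integral_exp_neg_sq hτ0
      _ = τ ^ 2 * (2 * exp (τ ^ 2) * I) := by ring
      _ ≤ z ^ 2 * (2 * exp (τ ^ 2) * I) := by gcongr
      _ = exp (τ ^ 2) * I * (2 * z ^ 2) := by ring
  calc (exp (z ^ 2) - 1) / (4 * z ^ 2) - 1 / 4
      = ∫ τ in (0:ℝ)..z, (τ * exp (τ ^ 2) - τ) / (2 * z ^ 2) := by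
        rw [integral_div, integral_sub ((by fun_prop : Continuous _).intervalIntegrable _ _)
          intervalIntegrable_id, integral_id, integral_mul_exp_sq]
        field_simp
        ring
    _ ≤ _ := integral_mono_on hz.le ((by fun_prop : Continuous _).intervalIntegrable _ _)
        ((by fun_prop : Continuous _).intervalIntegrable _ _) hpointwise

/-- **Lower bound on the O–U mean first passage time.**
For every `μ > 0` and threshold `η > 0`, the mean first passage time
`T̄(η) = (2/μ)(√π·φ(η√(μ/2)) + ψ(η√(μ/2)))`, with `φ(z) = ∫₀^z e^{τ²} dτ` and
`ψ(z) = ∫₀^z ∫₀^τ e^{τ²} e^{−s²} ds dτ`, satisfies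
`T̄(η) ≥ (2/μ)(√π(e^{η²μ/2} − 1)/(√2·η·√μ) + (e^{η²μ/2} − 1)/(2η²μ) − 1/2)`. -/
theorem ou_mean_first_passage_time_lower_bound (μ η : ℝ) (hμ : 0 < μ) (hη : 0 < η) :
    2 / μ * (Real.sqrt Real.pi * (Real.exp (η ^ 2 * μ / 2) - 1) / (Real.sqrt 2 * η * Real.sqrt μ)
        + (Real.exp (η ^ 2 * μ / 2) - 1) / (2 * η ^ 2 * μ) - 1 / 2)
      ≤ 2 / μ * (Real.sqrt Real.pi * (∫ τ in (0:ℝ)..(η * Real.sqrt (μ / 2)), Real.exp (τ ^ 2))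
        + ∫ τ in (0:ℝ)..(η * Real.sqrt (μ / 2)),
            Real.exp (τ ^ 2) * ∫ s in (0:ℝ)..τ, Real.exp (-s ^ 2)) := by
  set z := η * √(μ / 2)
  have hz : 0 < z := by positivity
  have hz_sq : η ^ 2 * μ / 2 = z ^ 2 := by
    rw [mul_pow, sq_sqrt (by positivity)]; ring
  have h2z : √2 * η * √μ = 2 * z := by
    have hsqrt : √2 * √(μ / 2) = √μ := by rw [← sqrt_mul zero_le_two]; ring_nf
    linear_combination (-√2 * η) * hsqrt + (η * √(μ / 2)) * mul_self_sqrt zero_le_two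
  have hφ := mul_le_mul_of_nonneg_left (exp_sq_sub_one_div_le_integral_exp_sq hz) (sqrt_nonneg π)
  have hψ := le_integral_exp_sq_mul_integral_exp_neg_sq hz
  rw [hz_sq, h2z, show 2 * η ^ 2 * μ = 4 * z ^ 2 by rw [← hz_sq]; ring, mul_div_assoc]
  gcongr 2 / μ * ?_
  linarith
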